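/- arXiv:nucl-th/9505028 — 3 statements merged into one kernel-verified Lean document; each statement's English description precedes it below -/
import Mathlib

section
/- Let λ < 0 be real, let c be real with 0 < |c| < 1 and set s² = 1 − c². Then for every z ∈ ℂ with Re z ≤ λ/c² + (c²/(4s²|λ|))·(Im z)², there exist a real ρ ≥ 0 and a real η ∈ [−1, 1] such that (z − λ) + ρ + 2c·η·√(z − λ)·√ρ − s²·z = 0. -/
/-! With `w = √(z - λ)`, so that `z = w² + λ`, the equation reads
`c² w² + 2c (η√ρ) w + (ρ - s²λ) = 0`, a quadratic with real coefficients in `w`.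
Its non-real roots form a conjugate pair with real part `-η√ρ / c` and squared
modulus `(ρ - s²λ) / c²`, so we take `ρ = c²|w|² + s²λ` and `η√ρ = -c Re w`.
Such an `η ∈ [-1, 1]` exists iff `c² (Re w)² ≤ ρ`, i.e. `s²|λ| ≤ c² (Im w)²`; after
clearing denominators the parabolic condition on `z` factors as
`(s²|λ| - c² (Im w)²)(s²|λ| + c² (Re w)²) ≤ 0`, which is exactly this bound. -/

/-- Principal branch of the complex square root:
`csqrt w = exp ((1/2) * Log w)` (via `cpow`), agreeing with the usual
square root on nonnegative reals. -/
noncomputable def csqrt (w : ℂ) : ℂ := w ^ ((1 : ℂ) / 2)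

open Complex

lemma csqrt_sq (w : ℂ) : csqrt w ^ 2 = w := by
  simp [csqrt, one_div]

lemma csqrt_ofReal {r : ℝ} (hr : 0 ≤ r) : csqrt (r : ℂ) = (√r : ℂ) := by
  rw [csqrt, show (1 : ℂ) / 2 = ((1 / 2 : ℝ) : ℂ) by norm_num, ← ofReal_cpow hr,
    Real.sqrt_eq_rpow]

lemma sq_sub_two_re_mul_add_normSq (w : ℂ) : w ^ 2 - 2 * w.re * w + normSq w = 0 := by
  apply Complex.ext <;> simp [sq, normSq_apply] <;> ring

lemma exists_mem_Icc_mul_eq_of_abs_le {t r : ℝ} (h : |t| ≤ r) :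
    ∃ η ∈ Set.Icc (-1 : ℝ) 1, η * r = t := by
  have ht : r = 0 → t = 0 := fun hr => abs_nonpos_iff.mp (hr ▸ h)
  refine ⟨t / r, abs_le.mp ?_, div_mul_cancel_of_imp ht⟩
  rw [abs_div]
  exact div_le_one_of_le₀ (h.trans (le_abs_self r)) (abs_nonneg r)

lemma le_sq_im_of_re_le_parabola {lam c : ℝ} {w : ℂ} (hlam : lam < 0) (hc0 : c ≠ 0)
    (hc1 : c ^ 2 < 1)
    (h : (w ^ 2 + lam).re ≤
      lam / c ^ 2 + (c ^ 2 / (4 * (1 - c ^ 2) * |lam|)) * (w ^ 2 + lam).im ^ 2) :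
    (1 - c ^ 2) * -lam ≤ c ^ 2 * w.im ^ 2 := by
  have hc2 : 0 < c ^ 2 := by positivity
  have hs2 : 0 < 1 - c ^ 2 := by linarith
  have hL : 0 < -lam := by linarith
  have hre : (w ^ 2 + lam).re = w.re ^ 2 - w.im ^ 2 + lam := by simp [sq]
  have him : (w ^ 2 + lam).im = 2 * w.re * w.im := by simp [sq]; ring
  have hrhs : lam / c ^ 2 + c ^ 2 / (4 * (1 - c ^ 2) * -lam) * (2 * w.re * w.im) ^ 2
      = ((1 - c ^ 2) * -lam * lam + c ^ 4 * w.re ^ 2 * w.im ^ 2)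
        / (c ^ 2 * ((1 - c ^ 2) * -lam)) := by
    field_simp
    ring
  rw [hre, him, abs_of_neg hlam, hrhs, le_div_iff₀ (by positivity)] at h
  have hfactor : ((1 - c ^ 2) * -lam - c ^ 2 * w.im ^ 2)
      * ((1 - c ^ 2) * -lam + c ^ 2 * w.re ^ 2) ≤ 0 := by nlinarith
  have hpos : 0 < (1 - c ^ 2) * -lam + c ^ 2 * w.re ^ 2 := by positivity
  linarith [nonpos_of_mul_nonpos_left hfactor hpos]

lemma exists_root_of_le_sq_im {lam c : ℝ} {w : ℂ}
    (h : (1 - c ^ 2) * -lam ≤ c ^ 2 * w.im ^ 2) :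
    ∃ ρ η : ℝ, 0 ≤ ρ ∧ η ∈ Set.Icc (-1 : ℝ) 1 ∧
      w ^ 2 + ρ + 2 * c * η * w * (√ρ : ℂ) - (1 - (c : ℂ) ^ 2) * (w ^ 2 + lam) = 0 := by
  set ρ := c ^ 2 * normSq w + (1 - c ^ 2) * lam with hρ
  have hre_le : (c * w.re) ^ 2 ≤ ρ := by rw [hρ, normSq_apply]; nlinarith
  obtain ⟨η, hη, hηρ⟩ :=
    exists_mem_Icc_mul_eq_of_abs_le ((abs_neg (c * w.re)).trans_le (Real.abs_le_sqrt hre_le))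
  refine ⟨ρ, η, (sq_nonneg _).trans hre_le, hη, ?_⟩
  have hηρ' : (η : ℂ) * (√ρ : ℂ) = -(c * w.re) := by exact_mod_cast hηρ
  have hρ' : (ρ : ℂ) = c ^ 2 * normSq w + (1 - c ^ 2) * lam := by rw [hρ]; push_cast; ring
  linear_combination (c : ℂ) ^ 2 * sq_sub_two_re_mul_add_normSq w + hρ' + 2 * c * w * hηρ'

/-- For λ < 0, 0 < |c| < 1, s² = 1 − c², and every z with
Re z ≤ λ/c² + (c²/(4s²|λ|))·(Im z)², there exist ρ ≥ 0 and η ∈ [−1,1]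
such that (z − λ) + ρ + 2cη√(z−λ)√ρ − s²z = 0. -/
theorem exists_root_outside_parabolic_domain
    (lam c : ℝ) (z : ℂ)
    (hlam : lam < 0) (hc0 : 0 < |c|) (hc1 : |c| < 1)
    (hz : z.re ≤ lam / c ^ 2 + (c ^ 2 / (4 * (1 - c ^ 2) * |lam|)) * z.im ^ 2) :
    ∃ ρ η : ℝ, 0 ≤ ρ ∧ η ∈ Set.Icc (-1 : ℝ) 1 ∧
      (z - (lam : ℂ)) + (ρ : ℂ)
        + 2 * (c : ℂ) * (η : ℂ) * csqrt (z - (lam : ℂ)) * csqrt ((ρ : ℝ) : ℂ)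
        - (1 - (c : ℂ) ^ 2) * z = 0 := by
  set w := csqrt (z - lam)
  have hzw : z = w ^ 2 + lam := by rw [csqrt_sq]; ring
  have hc2 : c ^ 2 < 1 := by simpa [sq_abs] using pow_lt_one₀ (abs_nonneg c) hc1 two_ne_zero
  rw [hzw] at hz
  obtain ⟨ρ, η, hρ, hη, hroot⟩ := exists_root_of_le_sq_im
    (le_sq_im_of_re_le_parabola hlam (abs_pos.mp hc0) hc2 hz)
  refine ⟨ρ, η, hρ, hη, ?_⟩
  rw [csqrt_ofReal hρ]
  linear_combination hroot + (c : ℂ) ^ 2 * hzw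
end

section
/- Assume |λ₂| > c²·|λ₁|. Then the set of all z ∈ ℂ for which there exists η ∈ [−1, 1] solving equation (★) is exactly the real interval [z_lt, z_rt]; moreover z_rt < λ₁. -/
/-- Equation (★): (z − λ₁) + (z − λ₂) + 2cη√(z−λ₁)√(z−λ₂) − s²z = 0,
with s² = 1 − c². -/
def eqStar (l1 l2 c η : ℝ) (z : ℂ) : Prop :=
  (z - (l1 : ℂ)) + (z - (l2 : ℂ))
    + 2 * (c : ℂ) * (η : ℂ) * csqrt (z - (l1 : ℂ)) * csqrt (z - (l2 : ℂ))
    - (1 - (c : ℂ) ^ 2) * z = 0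

/-- Left end z_lt = (−|λ₁| − |λ₂| − 2c√(|λ₁||λ₂|))/s². -/
noncomputable def zLt (l1 l2 c : ℝ) : ℝ :=
  (-|l1| - |l2| - 2 * c * Real.sqrt (|l1| * |l2|)) / (1 - c ^ 2)

/-- Right end z_rt = (−|λ₁| − |λ₂| + 2c√(|λ₁||λ₂|))/s². -/
noncomputable def zRt (l1 l2 c : ℝ) : ℝ :=
  (-|l1| - |l2| + 2 * c * Real.sqrt (|l1| * |l2|)) / (1 - c ^ 2)

lemma csqrt_mul_self (w : ℂ) : csqrt w * csqrt w = w := by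
  unfold csqrt
  rcases eq_or_ne w 0 with h | h
  · simp [h, Complex.zero_cpow (by norm_num : (1:ℂ)/2 ≠ 0)]
  · rw [← Complex.cpow_add _ _ h]; norm_num

lemma csqrt_neg_real {x : ℝ} (hx : x < 0) :
    csqrt (x:ℂ) = (Real.sqrt (-x) : ℂ) * Complex.I := by
  have h1 : ((1:ℂ)/2) = (2⁻¹ : ℂ) := by norm_num
  have hre : (csqrt (x:ℂ)).re = 0 := by
    rw [csqrt, h1, Complex.cpow_inv_two_re]
    simp [Complex.norm_real, Real.norm_eq_abs, abs_of_neg hx]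
  have him : (csqrt (x:ℂ)).im = Real.sqrt (-x) := by
    rw [csqrt, h1, Complex.cpow_inv_two_im_eq_sqrt (by simp)]
    have : (‖(x:ℂ)‖ - (x:ℂ).re)/2 = -x := by
      simp [Complex.norm_real, Real.norm_eq_abs, abs_of_neg hx]; ring
    rw [this]
  apply Complex.ext <;> simp [hre, him]

lemma im_eq_zero_of_sq_real {w : ℂ} {d : ℝ} (h : w^2 = (d:ℂ)) (hd : 0 ≤ d) :
    w.im = 0 := by
  have h1 : w.re * w.im + w.im * w.re = 0 := by
    have := congrArg Complex.im h
    simpa [pow_two, Complex.mul_im] using this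
  have h2 : w.re * w.re - w.im * w.im = d := by
    have := congrArg Complex.re h
    simpa [pow_two, Complex.mul_re] using this
  by_contra hne
  have hre0 : w.re = 0 := by
    have h3 : w.re * w.im = 0 := by linear_combination h1/2
    rcases mul_eq_zero.mp h3 with h' | h'
    · exact h'
    · exact absurd h' hne
  rw [hre0] at h2
  have := mul_self_pos.mpr hne
  linarith

set_option maxHeartbeats 1000000 in
/-- if |λ₂| > c²|λ₁| then the set of z ∈ ℂ solving (★) for
some η ∈ [−1,1] is exactly the real segment [z_lt, z_rt]; moreover
z_rt < λ₁. -/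
theorem root_set_is_real_interval
    (l1 l2 c : ℝ) (h12 : l1 ≤ l2) (h2 : l2 < 0) (hc : 0 < c) (hc1 : c < 1)
    (habs : |l2| > c ^ 2 * |l1|) :
    {z : ℂ | ∃ η ∈ Set.Icc (-1 : ℝ) 1, eqStar l1 l2 c η z}
        = (fun x : ℝ => (x : ℂ)) '' Set.Icc (zLt l1 l2 c) (zRt l1 l2 c)
      ∧ zRt l1 l2 c < l1 := by
  have hl1 : l1 < 0 := lt_of_le_of_lt h12 h2
  have habs1 : |l1| = -l1 := abs_of_neg hl1
  have habs2 : |l2| = -l2 := abs_of_neg h2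
  rw [habs1, habs2] at habs
  have hs2 : (0:ℝ) < 1 - c^2 := by nlinarith
  set r := Real.sqrt (|l1| * |l2|) with hrdef
  have hprodnn : (0:ℝ) ≤ |l1| * |l2| := by positivity
  have hr2 : r^2 = l1 * l2 := by
    rw [hrdef, Real.sq_sqrt hprodnn, habs1, habs2]; ring
  have hr0 : 0 < r := by
    rw [hrdef]; apply Real.sqrt_pos.2; rw [habs1, habs2]; nlinarith
  -- key sign facts
  have hB1 : 0 < c^2*l1 - l2 := by nlinarith
  have hB2 : 0 < c^2*l2 - l1 := by nlinarith
  -- z_rt < l1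
  have hkey : 2*c*r < -(c^2*l1) - l2 := by
    have hs : 0 < -(c^2*l1) - l2 := by nlinarith
    have hsq4 : (2*c*r)^2 = 4*c^2*(l1*l2) := by rw [mul_pow, mul_pow, hr2]; ring
    by_contra hcon
    push_neg at hcon
    have := mul_le_mul hcon hcon hs.le (le_trans hs.le hcon)
    nlinarith [mul_pos hB1 hB1, hsq4]
  have hzrt : zRt l1 l2 c < l1 := by
    rw [zRt, ← hrdef, habs1, habs2, div_lt_iff₀ hs2]
    nlinarith [hkey]
  refine ⟨?_, hzrt⟩
  ext z
  simp only [Set.mem_setOf_eq, Set.mem_image]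
  constructor
  · rintro ⟨η, ⟨hη1, hη2⟩, heq⟩
    have hη2' : η^2 ≤ 1 := by nlinarith
    unfold eqStar at heq
    have ha : csqrt (z - (l1:ℂ)) * csqrt (z - (l1:ℂ)) = z - l1 := csqrt_mul_self _
    have hb : csqrt (z - (l2:ℂ)) * csqrt (z - (l2:ℂ)) = z - l2 := csqrt_mul_self _
    set a := csqrt (z - (l1:ℂ))
    set b := csqrt (z - (l2:ℂ))
    have h2' : 2*(c:ℂ)*(η:ℂ)*a*b = ((l1:ℂ)+l2) - (1+(c:ℂ)^2)*z := by
      linear_combination heq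
    have hsq : 4*(c:ℂ)^2*(η:ℂ)^2*(z - l1)*(z - l2)
        = ((1+(c:ℂ)^2)*z - ((l1:ℂ)+l2))^2 := by
      calc 4*(c:ℂ)^2*(η:ℂ)^2*(z - l1)*(z - l2)
          = (2*(c:ℂ)*(η:ℂ)*a*b)^2 := by rw [← ha, ← hb]; ring
        _ = (((l1:ℂ)+l2) - (1+(c:ℂ)^2)*z)^2 := by rw [h2']
        _ = ((1+(c:ℂ)^2)*z - ((l1:ℂ)+l2))^2 := by ring
    -- realness
    have hBpos : 0 < (l1*l2)*(1-c^2)^2 + c^2*(η^2-1)*((l1-l2)^2) := by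
      nlinarith [mul_pos hB1 hB2, sq_nonneg (c*η*(l1-l2))]
    have hApos : (0:ℝ) < (1+c^2)^2 - 4*c^2*η^2 := by
      nlinarith [mul_nonneg (by linarith : (0:ℝ) ≤ 1 - η^2) (by positivity : (0:ℝ) ≤ 4*c^2)]
    have hDnn : (0:ℝ) ≤ ((l1+l2)*((1+c^2) - 2*c^2*η^2))^2
        - ((1+c^2)^2 - 4*c^2*η^2)*((l1+l2)^2 - 4*c^2*η^2*(l1*l2)) := by
      linarith [mul_nonneg (sq_nonneg (c*η)) hBpos.le]
    have hw : ((((1+c^2)^2 - 4*c^2*η^2 : ℝ) : ℂ) * z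
          - (((l1+l2)*((1+c^2) - 2*c^2*η^2) : ℝ) : ℂ))^2
        = ((((l1+l2)*((1+c^2) - 2*c^2*η^2))^2
            - ((1+c^2)^2 - 4*c^2*η^2)*((l1+l2)^2 - 4*c^2*η^2*(l1*l2)) : ℝ) : ℂ) := by
      push_cast
      linear_combination (-((1:ℂ)+(c:ℂ)^2)^2 + 4*(c:ℂ)^2*(η:ℂ)^2) * hsq
    have hwim : ((((1+c^2)^2 - 4*c^2*η^2 : ℝ) : ℂ) * z
          - (((l1+l2)*((1+c^2) - 2*c^2*η^2) : ℝ) : ℂ)).im = 0 :=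
      im_eq_zero_of_sq_real hw hDnn
    have hzim : z.im = 0 := by
      have him : ((1+c^2)^2 - 4*c^2*η^2) * z.im = 0 := by
        have h' := hwim
        rw [Complex.sub_im, Complex.mul_im, Complex.ofReal_re, Complex.ofReal_im,
          Complex.ofReal_im] at h'
        linarith [h']
      rcases mul_eq_zero.mp him with h | h
      · exact absurd h (ne_of_gt hApos)
      · exact h
    set x := z.re with hxdef
    have hzx : z = (x:ℂ) := by
      apply Complex.ext <;> simp [hzim, hxdef]
    rw [hzx] at hsq
    have hsqR : 4*c^2*η^2*(x - l1)*(x - l2) = ((1+c^2)*x - (l1+l2))^2 := by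
      exact_mod_cast hsq
    -- show (x-l1)(x-l2) ≥ 0
    have hpr : 0 ≤ (x - l1)*(x - l2) := by
      by_contra hC
      push_neg at hC
      have hz0 : ((1+c^2)*x - (l1+l2))^2 ≤ 0 := by
        nlinarith [mul_nonneg (sq_nonneg η) (le_of_lt (neg_pos.2 hC)), hsqR]
      have hx1 : (1+c^2)*x = l1+l2 := by
        nlinarith [sq_nonneg ((1+c^2)*x - (l1+l2))]
      have hxlt : x < l1 := by
        rw [show x = (l1+l2)/(1+c^2) from by field_simp; linarith [hx1],
          div_lt_iff₀ (by positivity : (0:ℝ) < 1+c^2)]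
        nlinarith [hB1]
      nlinarith [mul_pos_of_neg_of_neg (sub_neg.2 hxlt) (sub_neg.2 (lt_of_lt_of_le hxlt h12))]
    have hq1 : ((1+c^2)*x - (l1+l2))^2 ≤ 4*c^2*((x - l1)*(x - l2)) := by
      nlinarith [mul_nonneg (by linarith : (0:ℝ) ≤ 1 - η^2)
        (mul_nonneg (by positivity : (0:ℝ) ≤ 4*c^2) hpr), hsqR]
    -- factor q1 and conclude interval membership
    have hr2c : 4*c^2*r^2 = 4*c^2*(l1*l2) := by rw [hr2]
    have hfact : ((1-c^2)*x - (l1+l2) - 2*c*r) * ((1-c^2)*x - (l1+l2) + 2*c*r) ≤ 0 := by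
      linarith [hq1, hr2c]
    have hT2 : 0 ≤ (1-c^2)*x - (l1+l2) + 2*c*r := by
      by_contra hC
      push_neg at hC
      have hT1 : (1-c^2)*x - (l1+l2) - 2*c*r < 0 := by
        linarith [mul_pos hc hr0]
      linarith [mul_pos_of_neg_of_neg hT1 hC, hfact]
    have hT1 : (1-c^2)*x - (l1+l2) - 2*c*r ≤ 0 := by
      by_contra hC
      push_neg at hC
      have hT2' : 0 < (1-c^2)*x - (l1+l2) + 2*c*r := by
        linarith [mul_pos hc hr0]
      linarith [mul_pos hC hT2', hfact]
    refine ⟨x, ⟨?_, ?_⟩, hzx.symm⟩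
    · rw [zLt, ← hrdef, habs1, habs2, div_le_iff₀ hs2]
      linarith [hT2]
    · rw [zRt, ← hrdef, habs1, habs2, le_div_iff₀ hs2]
      linarith [hT1]
  · rintro ⟨x, ⟨hx1, hx2⟩, rfl⟩
    show ∃ η ∈ Set.Icc (-1 : ℝ) 1, eqStar l1 l2 c η (x:ℂ)
    have hxlt : x < l1 := lt_of_le_of_lt hx2 hzrt
    have hxlt2 : x < l2 := lt_of_lt_of_le hxlt h12
    -- recover the quadratic inequality
    have hT2 : 0 ≤ (1-c^2)*x - (l1+l2) + 2*c*r := by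
      rw [zLt, ← hrdef, habs1, habs2, div_le_iff₀ hs2] at hx1
      linarith [hx1]
    have hT1 : (1-c^2)*x - (l1+l2) - 2*c*r ≤ 0 := by
      rw [zRt, ← hrdef, habs1, habs2, le_div_iff₀ hs2] at hx2
      linarith [hx2]
    have hr2c : 4*c^2*r^2 = 4*c^2*(l1*l2) := by rw [hr2]
    have hq1 : ((1+c^2)*x - (l1+l2))^2 ≤ 4*c^2*((x - l1)*(x - l2)) := by
      linarith [mul_nonneg (neg_nonneg.2 hT1) hT2, hr2c]
    set p := Real.sqrt (l1 - x) with hpdef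
    set q := Real.sqrt (l2 - x) with hqdef
    have hp0 : 0 < p := Real.sqrt_pos.2 (by linarith)
    have hq0 : 0 < q := Real.sqrt_pos.2 (by linarith)
    have hp2 : p^2 = l1 - x := Real.sq_sqrt (by linarith)
    have hq2 : q^2 = l2 - x := Real.sq_sqrt (by linarith)
    have hR0 : 0 < 2*c*(p*q) := by positivity
    set N := (1+c^2)*x - (l1+l2) with hNdef
    have hpq4 : 4*c^2*(p*q)^2 = 4*c^2*((l1-x)*(l2-x)) := by
      rw [mul_pow, hp2, hq2]
    have hNsq : N^2 ≤ (2*c*(p*q))^2 := by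
      linarith [hq1, hpq4]
    have hNabs : |N| ≤ 2*c*(p*q) := by
      have h1 : |N| = Real.sqrt (N^2) := (Real.sqrt_sq_eq_abs N).symm
      rw [h1, show 2*c*(p*q) = Real.sqrt ((2*c*(p*q))^2) from
        (Real.sqrt_sq hR0.le).symm]
      exact Real.sqrt_le_sqrt hNsq
    refine ⟨N / (2*c*(p*q)), ?_, ?_⟩
    · rw [Set.mem_Icc, ← abs_le, abs_div, abs_of_pos hR0, div_le_one hR0]
      exact hNabs
    · unfold eqStar
      have e1 : csqrt ((x:ℂ) - (l1:ℂ)) = (p : ℂ) * Complex.I := by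
        rw [show (x:ℂ) - (l1:ℂ) = ((x - l1 : ℝ) : ℂ) by push_cast; ring,
          csqrt_neg_real (by linarith : x - l1 < 0), neg_sub, hpdef]
      have e2 : csqrt ((x:ℂ) - (l2:ℂ)) = (q : ℂ) * Complex.I := by
        rw [show (x:ℂ) - (l2:ℂ) = ((x - l2 : ℝ) : ℂ) by push_cast; ring,
          csqrt_neg_real (by linarith : x - l2 < 0), neg_sub, hqdef]
      rw [e1, e2]
      have hη : 2*c*(N / (2*c*(p*q)))*(p*q) = N := by
        field_simp
      have hmain : (x - l1) + (x - l2) - 2*c*(N / (2*c*(p*q)))*(p*q)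
          - (1 - c^2)*x = 0 := by
        rw [hη, hNdef]; ring
      have hC := congrArg (fun t : ℝ => (t:ℂ)) hmain
      push_cast at hC ⊢
      linear_combination hC + (2*(c:ℂ)*((N:ℂ)/(2*(c:ℂ)*((p:ℂ)*(q:ℂ))))*(p:ℂ)*(q:ℂ)) * Complex.I_mul_I
end

section
/- Assume |λ₂| < c²·|λ₁| and let η ∈ [−1, 1] satisfy |η| ≥ η*. Then z₊(η) and z₋(η) are real and both lie in the interval [z_lt, z_rt]; moreover z_rt < λ₁. -/
/-- z₊(η). -/
noncomputable def zPlus (l1 l2 c η : ℝ) : ℂ :=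
  ((((1 + c ^ 2 - 2 * c ^ 2 * η ^ 2) * (l1 + l2) : ℝ) : ℂ)
      + 2 * csqrt (((c ^ 2 * η ^ 2 *
          (l1 * l2 * (1 - c ^ 2) ^ 2 - (l2 - l1) ^ 2 * c ^ 2 * (1 - η ^ 2)) : ℝ) : ℂ)))
    / ((((1 + c ^ 2) ^ 2 - 4 * c ^ 2 * η ^ 2 : ℝ) : ℂ))

/-- z₋(η). -/
noncomputable def zMinus (l1 l2 c η : ℝ) : ℂ :=
  ((((1 + c ^ 2 - 2 * c ^ 2 * η ^ 2) * (l1 + l2) : ℝ) : ℂ)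
      - 2 * csqrt (((c ^ 2 * η ^ 2 *
          (l1 * l2 * (1 - c ^ 2) ^ 2 - (l2 - l1) ^ 2 * c ^ 2 * (1 - η ^ 2)) : ℝ) : ℂ)))
    / ((((1 + c ^ 2) ^ 2 - 4 * c ^ 2 * η ^ 2 : ℝ) : ℂ))

/-- η* = √(c² − ρ̂)·√(1 − c²ρ̂)/(c(1 − ρ̂)) with ρ̂ = |λ₂|/|λ₁|. -/
noncomputable def etaStar (l1 l2 c : ℝ) : ℝ :=
  Real.sqrt (c ^ 2 - |l2| / |l1|) * Real.sqrt (1 - c ^ 2 * (|l2| / |l1|))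
    / (c * (1 - |l2| / |l1|))

lemma csqrt_ofReal_s8 (x : ℝ) (hx : 0 ≤ x) : csqrt (x : ℂ) = ((Real.sqrt x : ℝ) : ℂ) := by
  unfold csqrt
  rw [Real.sqrt_eq_rpow, show ((1:ℂ)/2) = ((1/2:ℝ):ℂ) by norm_num, ← Complex.ofReal_cpow hx]



set_option maxHeartbeats 1000000 in
lemma aux_rt (a b c : ℝ) (ha : 0 < a) (hb : 0 < b) (hc : 0 < c) (hba : b < c^2*a) :
    -a - b + 2*c*Real.sqrt (a*b) < -a*(1-c^2) := by
  set g := Real.sqrt (a*b) with hgdef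
  have hg0 : 0 ≤ g := Real.sqrt_nonneg _
  have hg2 : g^2 = a*b := Real.sq_sqrt (by positivity)
  have hY : 0 < b + c^2*a + 2*c*g := by positivity
  nlinarith [pow_pos (sub_pos.2 hba) 2, hg2, hY]

set_option maxHeartbeats 2000000 in
lemma aux_main (a b c η : ℝ) (ha : 0 < a) (hb : 0 < b) (hba : b < c^2*a)
    (hc : 0 < c) (hc1 : c < 1) (hη2 : η^2 ≤ 1)
    (hKey : (c^2*a - b)*(a - c^2*b) ≤ c^2*η^2*(a-b)^2) :
    0 ≤ c^2*η^2*(a*b*(1-c^2)^2 - (a-b)^2*c^2*(1-η^2))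
    ∧ ((1 + c^2 - 2*c^2*η^2) * (-a + -b)
        + 2*Real.sqrt (c^2*η^2*(a*b*(1-c^2)^2 - (a-b)^2*c^2*(1-η^2)))) * (1 - c^2)
      ≤ (-a - b + 2*c*Real.sqrt (a*b)) * ((1+c^2)^2 - 4*c^2*η^2)
    ∧ (-a - b - 2*c*Real.sqrt (a*b)) * ((1+c^2)^2 - 4*c^2*η^2)
      ≤ ((1 + c^2 - 2*c^2*η^2) * (-a + -b)
        + 2*Real.sqrt (c^2*η^2*(a*b*(1-c^2)^2 - (a-b)^2*c^2*(1-η^2)))) * (1 - c^2)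
    ∧ ((1 + c^2 - 2*c^2*η^2) * (-a + -b)
        - 2*Real.sqrt (c^2*η^2*(a*b*(1-c^2)^2 - (a-b)^2*c^2*(1-η^2)))) * (1 - c^2)
      ≤ (-a - b + 2*c*Real.sqrt (a*b)) * ((1+c^2)^2 - 4*c^2*η^2)
    ∧ (-a - b - 2*c*Real.sqrt (a*b)) * ((1+c^2)^2 - 4*c^2*η^2)
      ≤ ((1 + c^2 - 2*c^2*η^2) * (-a + -b)
        - 2*Real.sqrt (c^2*η^2*(a*b*(1-c^2)^2 - (a-b)^2*c^2*(1-η^2)))) * (1 - c^2) := by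
  have hs2 : 0 < 1 - c^2 := by nlinarith
  have hab : b < a := by nlinarith
  have hDpos : 0 < (1+c^2)^2 - 4*c^2*η^2 := by nlinarith [sq_nonneg (1-c^2), sq_nonneg c]
  set g := Real.sqrt (a*b) with hgdef
  have hg0 : 0 ≤ g := Real.sqrt_nonneg _
  have hg2 : g^2 = a*b := Real.sq_sqrt (by positivity)
  have hinner : 0 ≤ a*b*(1-c^2)^2 - (a-b)^2*c^2*(1-η^2) := by nlinarith [hKey]
  set A : ℝ := c^2*η^2*(a*b*(1-c^2)^2 - (a-b)^2*c^2*(1-η^2)) with hAdef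
  have harg : 0 ≤ A := mul_nonneg (by positivity) hinner
  set t := Real.sqrt A with htdef
  have ht0 : 0 ≤ t := Real.sqrt_nonneg _
  have ht2 : t^2 = A := Real.sq_sqrt harg
  have hfac1 : 0 < c^2*a - b := by linarith
  have hfac2 : 0 < a - c^2*b := by nlinarith
  have h2g : 0 ≤ c*(a+b) - (1+c^2)*g := by
    have hY : 0 < c*(a+b) + (1+c^2)*g := by positivity
    nlinarith [mul_pos hfac1 hfac2, hg2, hY]
  have hab2g : 2*g ≤ a + b := by nlinarith [sq_nonneg (a-b), hg2, hg0]
  have h1g : 0 ≤ (a+b)*(1+c^2) - 4*c*g := by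
    nlinarith [mul_nonneg (sub_nonneg.2 hab2g) (by positivity : (0:ℝ) ≤ 1 + c^2),
      mul_nonneg hg0 (sq_nonneg (1-c))]
  have h4 : 0 ≤ b + c^2*a - 2*c*g := by
    have hY : 0 < b + c^2*a + 2*c*g := by positivity
    nlinarith [sq_nonneg (c^2*a - b), hg2, hY]
  have h5 : 0 ≤ a + c^2*b - 2*c*g := by
    have hY : 0 < a + c^2*b + 2*c*g := by positivity
    nlinarith [sq_nonneg (a - c^2*b), hg2, hY]
  have hB : (c*g*((1+c^2)^2 - 4*c^2*η^2) - (a+b)*(1+c^2)*(c^2 - c^2*η^2)) * (a-b)^2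
      = ((a+b)*(1+c^2) - 4*c*g) * (c^2*η^2*(a-b)^2 - (c^2*a - b)*(a - c^2*b))
        + (1-c^2)^2*(a+b)*g*(c*(a+b) - (1+c^2)*g) := by
    linear_combination ((a+b)*(1 - c^2 - c^4 + c^6)) * hg2
  have hR0 : 0 ≤ c*g*((1+c^2)^2 - 4*c^2*η^2) - (a+b)*(1+c^2)*(c^2 - c^2*η^2) := by
    nlinarith [hB, mul_nonneg h1g (sub_nonneg.2 hKey),
      mul_nonneg (mul_nonneg (mul_nonneg (sq_nonneg (1-c^2)) (by positivity : (0:ℝ) ≤ a+b)) hg0) h2g,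
      sq_nonneg (a-b), pow_pos (sub_pos.2 hab) 2]
  have hv : 0 ≤ c^2 - c^2*η^2 := by nlinarith [sq_nonneg c]
  have hP : (c*g*((1+c^2)^2 - 4*c^2*η^2) - (a+b)*(1+c^2)*(c^2 - c^2*η^2))^2 - A*(1-c^2)^2
      = (c^2 - c^2*η^2)*((1-c^2)^2*(c*(a+b) - (1+c^2)*g)^2
          + 4*(c^2 - c^2*η^2)*(b + c^2*a - 2*c*g)*(a + c^2*b - 2*c*g)) := by
    rw [hAdef]
    linear_combination (c^2*η^2 + 4*c^4 - 8*c^4*η^2 - 8*c^6 + 14*c^6*η^2 + 4*c^8 - 8*c^8*η^2 + c^10*η^2) * hg2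
  have hRHSnn : 0 ≤ (c^2 - c^2*η^2)*((1-c^2)^2*(c*(a+b) - (1+c^2)*g)^2
      + 4*(c^2 - c^2*η^2)*(b + c^2*a - 2*c*g)*(a + c^2*b - 2*c*g)) :=
    mul_nonneg hv (add_nonneg (mul_nonneg (sq_nonneg _) (sq_nonneg _))
      (mul_nonneg (mul_nonneg (by positivity) h4) h5))
  have hx0 : 0 ≤ t*(1-c^2) := mul_nonneg ht0 hs2.le
  have hPt : (t*(1-c^2))^2 ≤ (c*g*((1+c^2)^2 - 4*c^2*η^2) - (a+b)*(1+c^2)*(c^2 - c^2*η^2))^2 := by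
    nlinarith [hP, hRHSnn, ht2]
  have hts : t*(1-c^2) ≤ c*g*((1+c^2)^2 - 4*c^2*η^2) - (a+b)*(1+c^2)*(c^2 - c^2*η^2) :=
    calc t*(1-c^2) = Real.sqrt ((t*(1-c^2))^2) := (Real.sqrt_sq hx0).symm
      _ ≤ Real.sqrt ((c*g*((1+c^2)^2 - 4*c^2*η^2) - (a+b)*(1+c^2)*(c^2 - c^2*η^2))^2) :=
          Real.sqrt_le_sqrt hPt
      _ = _ := Real.sqrt_sq hR0
  have hKV : 0 ≤ (a+b)*(1+c^2)*(c^2 - c^2*η^2) := mul_nonneg (by positivity) hv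
  have hcgD : 0 ≤ c*g*((1+c^2)^2 - 4*c^2*η^2) :=
    mul_nonneg (mul_nonneg hc.le hg0) hDpos.le
  refine ⟨harg, ?_, ?_, ?_, ?_⟩
  · linarith only [hts]
  · linarith only [hx0, hcgD, hKV]
  · linarith only [hR0, hx0]
  · linarith only [hts, hKV]

/-- if |λ₂| < c²|λ₁| and |η| ≥ η*, then z₊(η) and z₋(η) are
real and lie in [z_lt, z_rt]; moreover z_rt < λ₁. -/
theorem roots_real_in_interval_of_eta_ge_etaStar
    (l1 l2 c : ℝ) (h12 : l1 ≤ l2) (h2 : l2 < 0) (hc : 0 < c) (hc1 : c < 1)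
    (habs : |l2| < c ^ 2 * |l1|) (η : ℝ) (hη : η ∈ Set.Icc (-1 : ℝ) 1)
    (hηs : etaStar l1 l2 c ≤ |η|) :
    (zPlus l1 l2 c η).im = 0
      ∧ (zPlus l1 l2 c η).re ∈ Set.Icc (zLt l1 l2 c) (zRt l1 l2 c)
      ∧ (zMinus l1 l2 c η).im = 0
      ∧ (zMinus l1 l2 c η).re ∈ Set.Icc (zLt l1 l2 c) (zRt l1 l2 c)
      ∧ zRt l1 l2 c < l1 := by
  obtain ⟨a, rfl⟩ : ∃ a, l1 = -a := ⟨-l1, (neg_neg l1).symm⟩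
  obtain ⟨b, rfl⟩ : ∃ b, l2 = -b := ⟨-l2, (neg_neg l2).symm⟩
  obtain ⟨hηl, hηr⟩ := hη
  have hb : 0 < b := by linarith
  have ha : 0 < a := by linarith
  have ha1 : |(-a)| = a := by rw [abs_neg, abs_of_pos ha]
  have hb1 : |(-b)| = b := by rw [abs_neg, abs_of_pos hb]
  rw [ha1, hb1] at habs
  have hba : b < c^2 * a := habs
  have hs2 : 0 < 1 - c^2 := by nlinarith
  have hη2 : η^2 ≤ 1 := by nlinarith
  have hDpos : 0 < (1+c^2)^2 - 4*c^2*η^2 := by nlinarith [sq_nonneg (1-c^2), sq_nonneg c]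
  -- derive hKey from hηs
  have hρlt : b/a < c^2 := (div_lt_iff₀ ha).2 (by linarith)
  have hρpos : 0 < b/a := div_pos hb ha
  have hden : 0 < c*(1 - b/a) := mul_pos hc (by nlinarith)
  have hηs' : Real.sqrt (c^2 - b/a) * Real.sqrt (1 - c^2*(b/a)) ≤ |η| * (c*(1 - b/a)) := by
    have h := hηs
    unfold etaStar at h
    rw [ha1, hb1] at h
    exact (div_le_iff₀ hden).1 h
  have hprod : Real.sqrt ((c^2 - b/a)*(1 - c^2*(b/a))) ≤ |η| * (c*(1 - b/a)) := by
    rw [Real.sqrt_mul (by linarith)]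
    exact hηs'
  have hsq : (c^2 - b/a)*(1 - c^2*(b/a)) ≤ (|η| * (c*(1 - b/a)))^2 := by
    have hcc : c^2*(b/a) < c^2*c^2 := mul_lt_mul_of_pos_left hρlt (by positivity)
    have hc41 : c^2*c^2 < 1 := by nlinarith
    have h1c : 0 ≤ (c^2 - b/a)*(1 - c^2*(b/a)) :=
      mul_nonneg (by linarith) (by linarith)
    calc (c^2 - b/a)*(1 - c^2*(b/a)) = (Real.sqrt ((c^2 - b/a)*(1 - c^2*(b/a))))^2 :=
          (Real.sq_sqrt h1c).symm
      _ ≤ (|η| * (c*(1 - b/a)))^2 := by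
          apply pow_le_pow_left₀ (Real.sqrt_nonneg _) hprod
  have hKey : (c^2*a - b)*(a - c^2*b) ≤ c^2*η^2*(a-b)^2 := by
    have e1 : (c^2*a - b)*(a - c^2*b) = a^2*((c^2 - b/a)*(1 - c^2*(b/a))) := by
      field_simp
    have e2 : c^2*η^2*(a-b)^2 = a^2 * (|η| * (c*(1 - b/a)))^2 := by
      rw [mul_pow, mul_pow, sq_abs]
      field_simp
    rw [e1, e2]
    exact mul_le_mul_of_nonneg_left hsq (sq_nonneg a)
  obtain ⟨harg, hI1, hI2, hI3, hI4⟩ := aux_main a b c η ha hb hba hc hc1 hη2 hKey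
  have hrt' := aux_rt a b c ha hb hc hba
  -- real form of zPlus / zMinus
  have hXA : c ^ 2 * η ^ 2 * ((-a) * (-b) * (1 - c ^ 2) ^ 2 - ((-b) - (-a)) ^ 2 * c ^ 2 * (1 - η ^ 2))
      = c^2*η^2*(a*b*(1-c^2)^2 - (a-b)^2*c^2*(1-η^2)) := by ring
  have hX0 : 0 ≤ c ^ 2 * η ^ 2 * ((-a) * (-b) * (1 - c ^ 2) ^ 2 - ((-b) - (-a)) ^ 2 * c ^ 2 * (1 - η ^ 2)) := by
    rw [hXA]; exact harg
  have hDne : ((1 + c ^ 2) ^ 2 - 4 * c ^ 2 * η ^ 2 : ℝ) ≠ 0 := ne_of_gt hDpos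
  set t := Real.sqrt (c^2*η^2*(a*b*(1-c^2)^2 - (a-b)^2*c^2*(1-η^2))) with htdef
  have hzp : zPlus (-a) (-b) c η
      = ((((1 + c^2 - 2*c^2*η^2) * (-a + -b) + 2*t) / ((1+c^2)^2 - 4*c^2*η^2) : ℝ) : ℂ) := by
    unfold zPlus
    rw [csqrt_ofReal_s8 _ hX0, hXA, ← htdef]
    push_cast
    rw [div_eq_div_iff (by have := Complex.ofReal_ne_zero.2 hDne; push_cast at this; exact this) (by have := Complex.ofReal_ne_zero.2 hDne; push_cast at this; exact this)]
  have hzm : zMinus (-a) (-b) c η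
      = ((((1 + c^2 - 2*c^2*η^2) * (-a + -b) - 2*t) / ((1+c^2)^2 - 4*c^2*η^2) : ℝ) : ℂ) := by
    unfold zMinus
    rw [csqrt_ofReal_s8 _ hX0, hXA, ← htdef]
    push_cast
    rw [div_eq_div_iff (by have := Complex.ofReal_ne_zero.2 hDne; push_cast at this; exact this) (by have := Complex.ofReal_ne_zero.2 hDne; push_cast at this; exact this)]
  have hzlt : zLt (-a) (-b) c = (-a - b - 2*c*Real.sqrt (a*b)) / (1 - c^2) := by
    unfold zLt; rw [ha1, hb1]
  have hzrt : zRt (-a) (-b) c = (-a - b + 2*c*Real.sqrt (a*b)) / (1 - c^2) := by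
    unfold zRt; rw [ha1, hb1]
  have hrt : zRt (-a) (-b) c < -a := by
    rw [hzrt, div_lt_iff₀ hs2]
    exact hrt'
  refine ⟨?_, ?_, ?_, ?_, hrt⟩
  · rw [hzp]; exact Complex.ofReal_im _
  · rw [hzp, Complex.ofReal_re, Set.mem_Icc, hzlt, hzrt]
    constructor
    · rw [div_le_div_iff₀ hs2 hDpos]; exact hI2
    · rw [div_le_div_iff₀ hDpos hs2]; exact hI1
  · rw [hzm]; exact Complex.ofReal_im _
  · rw [hzm, Complex.ofReal_re, Set.mem_Icc, hzlt, hzrt]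
    constructor
    · rw [div_le_div_iff₀ hs2 hDpos]; exact hI4
    · rw [div_le_div_iff₀ hDpos hs2]; exact hI3
end
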